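/- arXiv:1110.2559 — 2 statements merged into one kernel-verified Lean document; each statement's English description precedes it below -/
import Mathlib

section
/- For a binary quartic of the shape Q = a4·z1^4 + 6·a2·z1^2·z2^2 + a0·z2^4, set I2(Q) := a0·a4 + 3·a2^2 and I3(Q) := a0·a2·a4 − a2^3. Let t ∈ ℂ with t^2 ≠ 4, and set q_t := z1^4 + t·z1^2·z2^2 + z2^4 and 𝐪_t := t·z1^4 − 12·z1^2·z2^2 + t·z2^4. Then I2(q_t)^3 − 27·I3(q_t)^2 ≠ 0, I3(𝐪_t) ≠ 0, and I2(𝐪_t)^3 / (27·I3(𝐪_t)^2) = I2(q_t)^3 / (I2(q_t)^3 − 27·I3(q_t)^2) = (t^2 + 12)^3 / (108·(t^2 − 4)^2). -/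
/-- The invariant `I2` of a binary quartic `a4 z1^4 + 6 a2 z1^2 z2^2 + a0 z2^4`. -/
def I2quartic (a4 a2 a0 : ℂ) : ℂ := a0 * a4 + 3 * a2 ^ 2

/-- The invariant `I3` of a binary quartic `a4 z1^4 + 6 a2 z1^2 z2^2 + a0 z2^4`. -/
def I3quartic (a4 a2 a0 : ℂ) : ℂ := a0 * a2 * a4 - a2 ^ 3

/-- For `t^2 ≠ 4`, with `q_t = z1^4 + t z1^2 z2^2 + z2^4`
(coefficients `a4 = 1, a2 = t/6, a0 = 1`) and the associated quartic
`𝐪_t = t z1^4 − 12 z1^2 z2^2 + t z2^4` (coefficients `a4 = t, a2 = −2, a0 = t`):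
the discriminant `I2(q_t)^3 − 27 I3(q_t)^2` is nonzero, `I3(𝐪_t)` is nonzero, and
`I2(𝐪_t)^3/(27 I3(𝐪_t)^2) = I2(q_t)^3/(I2(q_t)^3 − 27 I3(q_t)^2) = (t^2+12)^3/(108 (t^2−4)^2)`. -/
theorem quartic_invariants_associated (t : ℂ) (ht : t ^ 2 ≠ 4) :
    I2quartic 1 (t / 6) 1 ^ 3 - 27 * I3quartic 1 (t / 6) 1 ^ 2 ≠ 0 ∧
    I3quartic t (-2) t ≠ 0 ∧
    I2quartic t (-2) t ^ 3 / (27 * I3quartic t (-2) t ^ 2)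
      = I2quartic 1 (t / 6) 1 ^ 3
        / (I2quartic 1 (t / 6) 1 ^ 3 - 27 * I3quartic 1 (t / 6) 1 ^ 2) ∧
    I2quartic 1 (t / 6) 1 ^ 3
        / (I2quartic 1 (t / 6) 1 ^ 3 - 27 * I3quartic 1 (t / 6) 1 ^ 2)
      = (t ^ 2 + 12) ^ 3 / (108 * (t ^ 2 - 4) ^ 2) := by
  have h4 : t ^ 2 - 4 ≠ 0 := sub_ne_zero.mpr ht
  have hΔ : I2quartic 1 (t / 6) 1 ^ 3 - 27 * I3quartic 1 (t / 6) 1 ^ 2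
      = (t ^ 2 - 4) ^ 2 / 16 := by
    simp only [I2quartic, I3quartic]; ring
  have h3 : I3quartic t (-2) t = -2 * (t ^ 2 - 4) := by
    simp only [I3quartic]; ring
  refine ⟨by rw [hΔ]; exact div_ne_zero (pow_ne_zero 2 h4) (by norm_num), by rw [h3]; simp [h4], ?_, ?_⟩
  · rw [hΔ, h3]
    simp only [I2quartic]
    field_simp
    ring
  · rw [hΔ]
    simp only [I2quartic]
    field_simp
    ring
end

section
/- For a ternary cubic of the shape Q = a·z1^3 + b·z2^3 + c·z3^3 + 6·d·z1·z2·z3, set I4(Q) := a·b·c·d − d^4, I6(Q) := a^2·b^2·c^2 − 20·a·b·c·d^3 − 8·d^6, and Δ(Q) := I6(Q)^2 + 64·I4(Q)^3. Let t ∈ ℂ with t^3 + 27 ≠ 0, t ≠ 0 and t^3 ≠ 216, and set c_t := z1^3 + z2^3 + z3^3 + t·z1·z2·z3 and 𝐜_t := t·z1^3 + t·z2^3 + t·z3^3 − 18·z1·z2·z3. Then Δ(c_t) ≠ 0, I4(𝐜_t) ≠ 0, and Δ(𝐜_t) / (4096·I4(𝐜_t)^3) = I4(c_t)^3 / Δ(c_t)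 = −t^3·(t^3 − 216)^3 / (110592·(t^3 + 27)^3). -/
/-- The invariant `I4` of a ternary cubic `a z1^3 + b z2^3 + c z3^3 + 6 d z1 z2 z3`. -/
def I4cubic (a b c d : ℂ) : ℂ := a * b * c * d - d ^ 4

/-- The invariant `I6` of a ternary cubic `a z1^3 + b z2^3 + c z3^3 + 6 d z1 z2 z3`. -/
def I6cubic (a b c d : ℂ) : ℂ := a ^ 2 * b ^ 2 * c ^ 2 - 20 * a * b * c * d ^ 3 - 8 * d ^ 6

/-- The discriminant `Δ = I6^2 + 64 I4^3` of a ternary cubic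
`a z1^3 + b z2^3 + c z3^3 + 6 d z1 z2 z3`. -/
def Dcubic (a b c d : ℂ) : ℂ := I6cubic a b c d ^ 2 + 64 * I4cubic a b c d ^ 3

/-- For `t^3 + 27 ≠ 0`, `t ≠ 0`, `t^3 ≠ 216`, with
`c_t = z1^3 + z2^3 + z3^3 + t z1 z2 z3` (coefficients `a = b = c = 1, d = t/6`) and the
associated cubic `𝐜_t = t z1^3 + t z2^3 + t z3^3 − 18 z1 z2 z3`
(coefficients `a = b = c = t, d = −3`): `Δ(c_t) ≠ 0`, `I4(𝐜_t) ≠ 0`, and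
`Δ(𝐜_t)/(4096 I4(𝐜_t)^3) = I4(c_t)^3/Δ(c_t) = −t^3 (t^3 − 216)^3/(110592 (t^3 + 27)^3)`. -/
theorem ternary_cubic_invariants_associated (t : ℂ)
    (h27 : t ^ 3 + 27 ≠ 0) (h0 : t ≠ 0) (h216 : t ^ 3 ≠ 216) :
    Dcubic 1 1 1 (t / 6) ≠ 0 ∧
    I4cubic t t t (-3) ≠ 0 ∧
    Dcubic t t t (-3) / (4096 * I4cubic t t t (-3) ^ 3)
      = I4cubic 1 1 1 (t / 6) ^ 3 / Dcubic 1 1 1 (t / 6) ∧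
    I4cubic 1 1 1 (t / 6) ^ 3 / Dcubic 1 1 1 (t / 6)
      = -t ^ 3 * (t ^ 3 - 216) ^ 3 / (110592 * (t ^ 3 + 27) ^ 3) := by
  have hDc : Dcubic 1 1 1 (t / 6) = (t ^ 3 + 27) ^ 3 / 19683 := by
    unfold Dcubic I6cubic I4cubic; ring
  have hI4b : I4cubic t t t (-3) = -3 * (t ^ 3 + 27) := by
    unfold I4cubic; ring
  have hDb : Dcubic t t t (-3) = t ^ 3 * (t ^ 3 - 216) ^ 3 := by
    unfold Dcubic I6cubic I4cubic; ring
  have hI4c : I4cubic 1 1 1 (t / 6) = -t * (t ^ 3 - 216) / 1296 := by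
    unfold I4cubic; ring
  have hDcne : Dcubic 1 1 1 (t / 6) ≠ 0 := by
    rw [hDc]
    exact div_ne_zero (pow_ne_zero 3 h27) (by norm_num)
  have hI4bne : I4cubic t t t (-3) ≠ 0 := by
    rw [hI4b]
    exact mul_ne_zero (by norm_num) h27
  refine ⟨hDcne, hI4bne, ?_, ?_⟩
  · rw [hDb, hI4b, hDc, hI4c]
    field_simp
    ring
  · rw [hDc, hI4c]
    field_simp
    ring
end
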